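/- Let c > 1 and ν > 0, and let g_{c,ν} be the inner product on 𝔤_c whose matrix in the basis e₀, e₁, e₂ is [[1, 1, 0], [1, c, 0], [0, 0, ν]]. Then (𝔤_c, g_{c,ν}) is Einstein with Ric = −(2/ν)·g_{c,ν}, and moreover its curvature tensor satisfies R(X,Y)Z = −(1/ν)·(g_{c,ν}(Y,Z)·X − g_{c,ν}(X,Z)·Y) for all X, Y, Z; that is, the corresponding left-invariant metric has constant sectional curvature −1/ν (so (G_c, g_{c,ν}) is isometric to real hyperbolic 3-space and its isometry group is SO(3,1)). -/

import Mathlib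

noncomputable section

open scoped BigOperators

/-- The underlying space of the 3-dimensional Lie algebras under consideration. -/
abbrev V3 : Type := Fin 3 → ℝ

/-- The standard basis `e₀, e₁, e₂`. -/
def e3 (i : Fin 3) : V3 := Pi.single i 1

/-- The bracket of the Lie algebra `𝔤_c`:
`[e₀,e₁] = 0`, `[e₂,e₀] = e₁`, `[e₂,e₁] = −c e₀ + 2 e₁`, extended bilinearly. -/
def braC (c : ℝ) (x y : V3) : V3 :=
  ![-c * (x 2 * y 1 - y 2 * x 1),
    (x 2 * y 0 - y 2 * x 0) + 2 * (x 2 * y 1 - y 2 * x 1),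
    0]

/-- The inner product `g_{c,ν}` on `𝔤_c`, `c > 1`, with matrix
`[[1,1,0],[1,c,0],[0,0,ν]]` in the basis `e₀,e₁,e₂`. -/
def gE (c ν : ℝ) (x y : V3) : ℝ :=
  x 0 * y 0 + (x 0 * y 1 + x 1 * y 0) + c * (x 1 * y 1) + ν * (x 2 * y 2)

/-- The curvature tensor `R(X,Y)Z = ∇_X ∇_Y Z − ∇_Y ∇_X Z − ∇_{[X,Y]} Z`. -/
def Rc (br nab : V3 → V3 → V3) (X Y Z : V3) : V3 :=
  nab X (nab Y Z) - nab Y (nab X Z) - nab (br X Y) Z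

/-- The Ricci form `Ric(X,Y) = tr (Z ↦ R(Z,X)Y)`. -/
def RicF (br nab : V3 → V3 → V3) (X Y : V3) : ℝ :=
  ∑ k : Fin 3, Rc br nab (e3 k) X Y k

/-!
The Koszul formula determines `∇` because `g_{c,ν}` is nondegenerate (its Gram determinant is
`(c - 1) ν`), and the explicit product `leviCivita` satisfies it. Substituting `leviCivita` into the
curvature tensor gives the constant-curvature form `R(X,Y)Z = κ (g(Y,Z) X − g(X,Z) Y)` with
`κ = −1/ν`; tracing it yields `Ric = (3 − 1) κ g = −(2/ν) g`.
-/

def leviCivita (c ν : ℝ) (x y : V3) : V3 :=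
  ![-(x 0 * y 2) - x 2 * y 0 - c * (x 2 * y 1),
    -(x 1 * y 2) + x 2 * y 0 + x 2 * y 1,
    (x 0 * y 0 + x 0 * y 1 + x 1 * y 0 + c * (x 1 * y 1)) / ν]

section

variable {c ν : ℝ}

theorem gE_sub_left (x y z : V3) : gE c ν (x - y) z = gE c ν x z - gE c ν y z := by
  simp only [gE, Pi.sub_apply]
  ring

theorem gE_eq_sum_mul_gE_e3 (x y : V3) : gE c ν x y = ∑ k, x k * gE c ν (e3 k) y := by
  simp only [gE, e3, Fin.sum_univ_three, Pi.single_apply, Fin.isValue, Fin.reduceEq, ↓reduceIte]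
  ring

theorem eq_zero_of_forall_gE_eq_zero (hc : c ≠ 1) (hν : ν ≠ 0) {x : V3}
    (h : ∀ z, gE c ν x z = 0) : x = 0 := by
  have h0 := h (e3 0)
  have h1 := h (e3 1)
  have h2 := h (e3 2)
  simp only [gE, e3, Fin.isValue, Pi.single_apply, Fin.reduceEq, ↓reduceIte] at h0 h1 h2
  have hx1 : x 1 = 0 := by
    have : (c - 1) * x 1 = 0 := by linear_combination h1 - h0
    exact (mul_eq_zero.mp this).resolve_left (sub_ne_zero.mpr hc)
  have hx0 : x 0 = 0 := by linear_combination h0 - hx1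
  have hx2 : x 2 = 0 := by
    have : ν * x 2 = 0 := by linear_combination h2
    exact (mul_eq_zero.mp this).resolve_left hν
  funext i
  fin_cases i <;> simpa

theorem leviCivita_koszul (hν : ν ≠ 0) (X Y Z : V3) :
    2 * gE c ν (leviCivita c ν X Y) Z =
      gE c ν (braC c X Y) Z - gE c ν (braC c Y Z) X + gE c ν (braC c Z X) Y := by
  simp only [gE, braC, leviCivita, Fin.isValue, Matrix.cons_val_zero, Matrix.cons_val_one,
    Matrix.cons_val]
  field_simp
  ring

theorem eq_leviCivita_of_koszul (hc : c ≠ 1) (hν : ν ≠ 0) {nab : V3 → V3 → V3}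
    (hK : ∀ X Y Z : V3, 2 * gE c ν (nab X Y) Z =
      gE c ν (braC c X Y) Z - gE c ν (braC c Y Z) X + gE c ν (braC c Z X) Y) :
    nab = leviCivita c ν := by
  funext X Y
  refine sub_eq_zero.mp (eq_zero_of_forall_gE_eq_zero hc hν fun Z => ?_)
  have h := hK X Y Z
  rw [← leviCivita_koszul hν] at h
  rw [gE_sub_left]
  linarith

theorem rc_leviCivita (hν : ν ≠ 0) (X Y Z : V3) :
    Rc (braC c) (leviCivita c ν) X Y Z = -(1/ν) • (gE c ν Y Z • X - gE c ν X Z • Y) := by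
  funext i
  fin_cases i <;>
    simp only [Rc, leviCivita, braC, gE, Pi.sub_apply, Pi.smul_apply, smul_eq_mul, Fin.isValue,
      Fin.zero_eta, Fin.mk_one, Fin.reduceFinMk, Matrix.cons_val, Matrix.cons_val_zero,
      Matrix.cons_val_one] <;> field_simp <;> ring

end

theorem ricF_eq_of_rc_eq_const_curvature {br nab : V3 → V3 → V3} {g : V3 → V3 → ℝ} {κ : ℝ}
    (hg : ∀ X Y, g X Y = ∑ k, X k * g (e3 k) Y)
    (hR : ∀ X Y Z, Rc br nab X Y Z = κ • (g Y Z • X - g X Z • Y)) (X Y : V3) :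
    RicF br nab X Y = 2 * κ * g X Y := by
  simp only [RicF, hR, Pi.smul_apply, Pi.sub_apply, smul_eq_mul, e3, Pi.single_apply,
    Fin.sum_univ_three, hg X Y, Fin.isValue, ↓reduceIte]
  ring

/-- for `c > 1` and `ν > 0`, `(𝔤_c, g_{c,ν})` is Einstein with
`Ric = −(2/ν) g_{c,ν}`, and its curvature tensor satisfies
`R(X,Y)Z = −(1/ν)(g(Y,Z) X − g(X,Z) Y)`, i.e. the left-invariant metric has
constant sectional curvature `−1/ν`. -/
theorem stmt13 (c ν : ℝ) (hc : 1 < c) (hν : 0 < ν) (nab : V3 → V3 → V3)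
    (hK : ∀ X Y Z : V3, 2 * gE c ν (nab X Y) Z =
      gE c ν (braC c X Y) Z - gE c ν (braC c Y Z) X + gE c ν (braC c Z X) Y) :
    (∀ X Y : V3, RicF (braC c) nab X Y = -(2/ν) * gE c ν X Y) ∧
    (∀ X Y Z : V3,
      Rc (braC c) nab X Y Z = -(1/ν) • (gE c ν Y Z • X - gE c ν X Z • Y)) := by
  obtain rfl := eq_leviCivita_of_koszul hc.ne' hν.ne' hK
  have hR := rc_leviCivita (c := c) hν.ne'
  refine ⟨fun X Y => ?_, hR⟩
  rw [ricF_eq_of_rc_eq_const_curvature gE_eq_sum_mul_gE_e3 hR]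
  ring
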